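/- arXiv:2401.05062 — 2 statements merged into one kernel-verified Lean document; each statement's English description precedes it below -/
import Mathlib

section
/- Let U ⊆ ℝ² be an open set and let H : U → ℝ be twice continuously differentiable with ∂²H/∂x∂y = 0 and e^{H}·∂H/∂x + ∂H/∂y = 2(e^{H} − 1) at every point of U. Then at every point of U, ∂²H/∂x² + (∂H/∂x)² = 2·∂H/∂x and ∂²H/∂y² − (∂H/∂y)² = 2·∂H/∂y. -/
/-!
Write `∂₁`, `∂₂` for the partial derivatives, taken as one-variable derivatives along horizontal
and vertical lines exactly as in the statement. Differentiating the identity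
`e^H ∂₁H + ∂₂H = 2(e^H - 1)`, which holds on the open set `U`, along each line gives
`e^H (∂₁H)² + e^H ∂₁∂₁H + ∂₁∂₂H = 2 e^H ∂₁H` and `e^H ∂₂H ∂₁H + e^H ∂₂∂₁H + ∂₂∂₂H = 2 e^H ∂₂H`.
The mixed partials vanish, the second one by symmetry of the second derivative of a `C²`
function. Cancelling `e^H` in the first equation gives the first ODE; in the second, substituting
`e^H ∂₁H = 2(e^H - 1) - ∂₂H` gives the second.
-/

open Set Filter Topology

section PartialDerivatives

variable {E : Type*} [NormedAddCommGroup E] [NormedSpace ℝ E]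

noncomputable def partialFst (f : ℝ × ℝ → E) (p : ℝ × ℝ) : E := deriv (fun x => f (x, p.2)) p.1

noncomputable def partialSnd (f : ℝ × ℝ → E) (p : ℝ × ℝ) : E := deriv (fun y => f (p.1, y)) p.2

variable {f g : ℝ × ℝ → E} {U : Set (ℝ × ℝ)} {p : ℝ × ℝ}

theorem HasFDerivAt.hasDerivAt_comp_mk_left {f' : ℝ × ℝ →L[ℝ] E} (hf : HasFDerivAt f f' p) :
    HasDerivAt (fun x => f (x, p.2)) (f' (1, 0)) p.1 :=
  hf.comp_hasDerivAt p.1 ((hasDerivAt_id p.1).prodMk (hasDerivAt_const p.1 p.2))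

theorem HasFDerivAt.hasDerivAt_comp_mk_right {f' : ℝ × ℝ →L[ℝ] E} (hf : HasFDerivAt f f' p) :
    HasDerivAt (fun y => f (p.1, y)) (f' (0, 1)) p.2 :=
  hf.comp_hasDerivAt p.2 ((hasDerivAt_const p.2 p.1).prodMk (hasDerivAt_id p.2))

theorem partialFst_eq_of_hasDerivAt {e : E} (h : HasDerivAt (fun x => f (x, p.2)) e p.1) :
    partialFst f p = e :=
  h.deriv

theorem partialSnd_eq_of_hasDerivAt {e : E} (h : HasDerivAt (fun y => f (p.1, y)) e p.2) :
    partialSnd f p = e :=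
  h.deriv

theorem DifferentiableAt.hasDerivAt_partialFst (hf : DifferentiableAt ℝ f p) :
    HasDerivAt (fun x => f (x, p.2)) (partialFst f p) p.1 :=
  (hf.comp p.1 (differentiableAt_id.prodMk (differentiableAt_const _))).hasDerivAt

theorem DifferentiableAt.hasDerivAt_partialSnd (hf : DifferentiableAt ℝ f p) :
    HasDerivAt (fun y => f (p.1, y)) (partialSnd f p) p.2 :=
  (hf.comp p.2 ((differentiableAt_const _).prodMk differentiableAt_id)).hasDerivAt

theorem partialFst_congr (hU : IsOpen U) (h : EqOn f g U) (hp : p ∈ U) :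
    partialFst f p = partialFst g p := by
  have hline : ∀ᶠ x in 𝓝 p.1, (x, p.2) ∈ U :=
    (continuous_id.prodMk continuous_const).continuousAt.preimage_mem_nhds (hU.mem_nhds hp)
  exact EventuallyEq.deriv_eq (hline.mono fun _ hx => h hx)

theorem partialSnd_congr (hU : IsOpen U) (h : EqOn f g U) (hp : p ∈ U) :
    partialSnd f p = partialSnd g p := by
  have hline : ∀ᶠ y in 𝓝 p.2, (p.1, y) ∈ U :=
    (continuous_const.prodMk continuous_id).continuousAt.preimage_mem_nhds (hU.mem_nhds hp)
  exact EventuallyEq.deriv_eq (hline.mono fun _ hy => h hy)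

theorem eqOn_partialFst_fderiv (hf : DifferentiableOn ℝ f U) (hU : IsOpen U) :
    EqOn (partialFst f) (fun q => fderiv ℝ f q (1, 0)) U := fun _ hq =>
  partialFst_eq_of_hasDerivAt
    (hf.differentiableAt (hU.mem_nhds hq)).hasFDerivAt.hasDerivAt_comp_mk_left

theorem eqOn_partialSnd_fderiv (hf : DifferentiableOn ℝ f U) (hU : IsOpen U) :
    EqOn (partialSnd f) (fun q => fderiv ℝ f q (0, 1)) U := fun _ hq =>
  partialSnd_eq_of_hasDerivAt
    (hf.differentiableAt (hU.mem_nhds hq)).hasFDerivAt.hasDerivAt_comp_mk_right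

theorem ContDiffOn.partialFst {m n : WithTop ℕ∞} (hf : ContDiffOn ℝ n f U) (hU : IsOpen U)
    (hmn : m + 1 ≤ n) : ContDiffOn ℝ m (partialFst f) U :=
  ((hf.fderiv_of_isOpen hU hmn).clm_apply contDiffOn_const).congr
    (eqOn_partialFst_fderiv (hf.differentiableOn (ne_bot_of_le_ne_bot (by simp) hmn)) hU)

theorem ContDiffOn.partialSnd {m n : WithTop ℕ∞} (hf : ContDiffOn ℝ n f U) (hU : IsOpen U)
    (hmn : m + 1 ≤ n) : ContDiffOn ℝ m (partialSnd f) U :=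
  ((hf.fderiv_of_isOpen hU hmn).clm_apply contDiffOn_const).congr
    (eqOn_partialSnd_fderiv (hf.differentiableOn (ne_bot_of_le_ne_bot (by simp) hmn)) hU)

theorem partialFst_partialSnd_eq_fderiv_fderiv (hf : ContDiffOn ℝ 2 f U) (hU : IsOpen U)
    (hp : p ∈ U) : partialFst (partialSnd f) p = fderiv ℝ (fderiv ℝ f) p (1, 0) (0, 1) := by
  have hf' : DifferentiableAt ℝ (fderiv ℝ f) p :=
    ((hf.fderiv_of_isOpen hU le_rfl).differentiableOn one_ne_zero).differentiableAt
      (hU.mem_nhds hp)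
  rw [partialFst_congr hU (eqOn_partialSnd_fderiv (hf.differentiableOn two_ne_zero) hU) hp]
  apply partialFst_eq_of_hasDerivAt
  simpa using
    (hf'.hasFDerivAt.clm_apply (hasFDerivAt_const ((0 : ℝ), (1 : ℝ)) p)).hasDerivAt_comp_mk_left

theorem partialSnd_partialFst_eq_fderiv_fderiv (hf : ContDiffOn ℝ 2 f U) (hU : IsOpen U)
    (hp : p ∈ U) : partialSnd (partialFst f) p = fderiv ℝ (fderiv ℝ f) p (0, 1) (1, 0) := by
  have hf' : DifferentiableAt ℝ (fderiv ℝ f) p :=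
    ((hf.fderiv_of_isOpen hU le_rfl).differentiableOn one_ne_zero).differentiableAt
      (hU.mem_nhds hp)
  rw [partialSnd_congr hU (eqOn_partialFst_fderiv (hf.differentiableOn two_ne_zero) hU) hp]
  apply partialSnd_eq_of_hasDerivAt
  simpa using
    (hf'.hasFDerivAt.clm_apply (hasFDerivAt_const ((1 : ℝ), (0 : ℝ)) p)).hasDerivAt_comp_mk_right

theorem partialSnd_partialFst_eq_partialFst_partialSnd (hf : ContDiffOn ℝ 2 f U)
    (hU : IsOpen U) (hp : p ∈ U) :
    partialSnd (partialFst f) p = partialFst (partialSnd f) p := by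
  rw [partialSnd_partialFst_eq_fderiv_fderiv hf hU hp,
    partialFst_partialSnd_eq_fderiv_fderiv hf hU hp]
  exact (hf.contDiffAt (hU.mem_nhds hp)).isSymmSndFDerivAt (by simp) _ _

end PartialDerivatives

/-- If a C² function `H` on an open set `U ⊆ ℝ²` satisfies `∂²H/∂x∂y = 0` and
`e^H ∂H/∂x + ∂H/∂y = 2(e^H − 1)`, then `∂²H/∂x² + (∂H/∂x)² = 2 ∂H/∂x` and
`∂²H/∂y² − (∂H/∂y)² = 2 ∂H/∂y` on `U`. -/
theorem H_second_order_ODEs (U : Set (ℝ × ℝ)) (hU : IsOpen U)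
    (H : ℝ × ℝ → ℝ) (hHC2 : ContDiffOn ℝ 2 H U)
    (hmixed : ∀ p ∈ U,
      deriv (fun x => deriv (fun y => H (x, y)) p.2) p.1 = 0)
    (heq : ∀ p ∈ U,
      Real.exp (H p) * deriv (fun x => H (x, p.2)) p.1
        + deriv (fun y => H (p.1, y)) p.2 = 2 * (Real.exp (H p) - 1)) :
    ∀ p ∈ U,
      (deriv (fun x => deriv (fun x' => H (x', p.2)) x) p.1
          + (deriv (fun x => H (x, p.2)) p.1) ^ 2
        = 2 * deriv (fun x => H (x, p.2)) p.1) ∧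
      (deriv (fun y => deriv (fun y' => H (p.1, y')) y) p.2
          - (deriv (fun y => H (p.1, y)) p.2) ^ 2
        = 2 * deriv (fun y => H (p.1, y)) p.2) := by
  intro p hp
  show partialFst (partialFst H) p + partialFst H p ^ 2 = 2 * partialFst H p ∧
    partialSnd (partialSnd H) p - partialSnd H p ^ 2 = 2 * partialSnd H p
  have hUp := hU.mem_nhds hp
  have hH := (hHC2.differentiableOn two_ne_zero).differentiableAt hUp
  have hH₁ := ((hHC2.partialFst hU le_rfl).differentiableOn one_ne_zero).differentiableAt hUp
  have hH₂ := ((hHC2.partialSnd hU le_rfl).differentiableOn one_ne_zero).differentiableAt hUp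
  have hpde : EqOn (fun q => Real.exp (H q) * partialFst H q + partialSnd H q)
      (fun q => 2 * (Real.exp (H q) - 1)) U := heq
  have hx := partialFst_congr hU hpde hp
  rw [partialFst_eq_of_hasDerivAt
      ((hH.hasDerivAt_partialFst.exp.mul hH₁.hasDerivAt_partialFst).add hH₂.hasDerivAt_partialFst),
    partialFst_eq_of_hasDerivAt (f := fun q => 2 * (Real.exp (H q) - 1))
      ((hH.hasDerivAt_partialFst.exp.sub_const 1).const_mul 2)] at hx
  have hy := partialSnd_congr hU hpde hp
  rw [partialSnd_eq_of_hasDerivAt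
      ((hH.hasDerivAt_partialSnd.exp.mul hH₁.hasDerivAt_partialSnd).add hH₂.hasDerivAt_partialSnd),
    partialSnd_eq_of_hasDerivAt (f := fun q => 2 * (Real.exp (H q) - 1))
      ((hH.hasDerivAt_partialSnd.exp.sub_const 1).const_mul 2)] at hy
  simp only [Prod.mk.eta] at hx hy
  have hmix : partialFst (partialSnd H) p = 0 := hmixed p hp
  have hsymm := partialSnd_partialFst_eq_partialFst_partialSnd hHC2 hU hp
  refine ⟨mul_left_cancel₀ (Real.exp_ne_zero (H p)) ?_, ?_⟩
  · linear_combination hx - hmix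
  · linear_combination hy - Real.exp (H p) * (hsymm.trans hmix) - partialSnd H p * hpde hp
end

section
/- Let c₃ > 0 and c₄ = 1/c₃, and let w : ℝ² → ℝ be differentiable with ∂w/∂x(x,y) = w(x,y) − c₄·e^{y−x} and ∂w/∂y(x,y) = w(x,y) − c₃·e^{x−y} for all (x,y) ∈ ℝ². Then there exists a constant η ∈ ℝ such that w(x,y) = cosh(y − x − log c₃) + η·e^{x+y} for all (x,y) ∈ ℝ². -/
/-!
`cosh (y - x - log c₃)` is a particular solution of the system, so the difference `d` between
`w` and it satisfies `∂d/∂x = d` and `∂d/∂y = d`. Solving these two scalar equations one variable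
at a time gives `d (x, y) = d (0, 0) * exp (x + y)`.
-/

open Real

theorem eq_mul_exp_of_hasDerivAt_self {f : ℝ → ℝ} (hf : ∀ t, HasDerivAt f (f t) t) (t : ℝ) :
    f t = f 0 * exp t := by
  have hg : ∀ s, HasDerivAt (fun s => f s * exp (-s)) 0 s := fun s => by
    have h := (hf s).mul (hasDerivAt_id' s).neg.exp
    rwa [mul_neg_one, mul_neg, add_neg_cancel] at h
  have hconst := is_const_of_deriv_eq_zero (fun s => (hg s).differentiableAt)
    (fun s => (hg s).deriv) t 0
  simp only [neg_zero, exp_zero, mul_one] at hconst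
  rw [← hconst, mul_assoc, ← exp_add, neg_add_cancel, exp_zero, mul_one]

theorem eq_mul_exp_add_of_hasDerivAt_partial_self {d : ℝ × ℝ → ℝ}
    (hx : ∀ x y, HasDerivAt (fun t => d (t, y)) (d (x, y)) x)
    (hy : ∀ x y, HasDerivAt (fun s => d (x, s)) (d (x, y)) y) (x y : ℝ) :
    d (x, y) = d (0, 0) * exp (x + y) := by
  rw [eq_mul_exp_of_hasDerivAt_self (hx · y) x, eq_mul_exp_of_hasDerivAt_self (hy 0 ·) y,
    exp_add]
  ring

theorem hasDerivAt_cosh_sub_sub_log_fst {c : ℝ} (hc : 0 < c) (x y : ℝ) :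
    HasDerivAt (fun t => cosh (y - t - log c)) (cosh (y - x - log c) - c⁻¹ * exp (y - x)) x := by
  have hexp : exp (y - x - log c) = c⁻¹ * exp (y - x) := by
    rw [exp_sub, exp_log hc, div_eq_inv_mul]
  convert (((hasDerivAt_id' x).const_sub y).sub_const (log c)).cosh using 1
  rw [← hexp, ← cosh_add_sinh]
  ring

theorem hasDerivAt_cosh_sub_sub_log_snd {c : ℝ} (hc : 0 < c) (x y : ℝ) :
    HasDerivAt (fun s => cosh (s - x - log c)) (cosh (y - x - log c) - c * exp (x - y)) y := by
  have hexp : exp (-(y - x - log c)) = c * exp (x - y) := by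
    rw [show -(y - x - log c) = x - y + log c by ring, exp_add, exp_log hc, mul_comm]
  convert (((hasDerivAt_id' y).sub_const x).sub_const (log c)).cosh using 1
  rw [← hexp, ← cosh_sub_sinh]
  ring

theorem hasDerivAt_partial_fst_of_differentiable {w : ℝ × ℝ → ℝ} (hw : Differentiable ℝ w)
    (x y : ℝ) : HasDerivAt (fun t => w (t, y)) (deriv (fun t => w (t, y)) x) x :=
  (hw.comp (differentiable_id.prodMk (differentiable_const y)) x).hasDerivAt

theorem hasDerivAt_partial_snd_of_differentiable {w : ℝ × ℝ → ℝ} (hw : Differentiable ℝ w)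
    (x y : ℝ) : HasDerivAt (fun s => w (x, s)) (deriv (fun s => w (x, s)) y) y :=
  (hw.comp ((differentiable_const x).prodMk differentiable_id) y).hasDerivAt

/-- Solving the linear first-order system `∂w/∂x = w − c₄ e^{y−x}`, `∂w/∂y = w − c₃ e^{x−y}`
with `c₄ = 1/c₃`: `w(x,y) = cosh(y − x − log c₃) + η e^{x+y}` for some constant `η`. -/
theorem linear_system_cosh_pos (c₃ c₄ : ℝ) (hc₃ : 0 < c₃) (hc₄ : c₄ = 1 / c₃)
    (w : ℝ × ℝ → ℝ) (hdiff : Differentiable ℝ w)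
    (hx : ∀ x y : ℝ, deriv (fun t => w (t, y)) x = w (x, y) - c₄ * Real.exp (y - x))
    (hy : ∀ x y : ℝ, deriv (fun s => w (x, s)) y = w (x, y) - c₃ * Real.exp (x - y)) :
    ∃ η : ℝ, ∀ x y : ℝ,
      w (x, y) = Real.cosh (y - x - Real.log c₃) + η * Real.exp (x + y) := by
  rw [one_div] at hc₄
  subst hc₄
  set d : ℝ × ℝ → ℝ := fun p => w p - cosh (p.2 - p.1 - log c₃)
  have hdx : ∀ x y, HasDerivAt (fun t => d (t, y)) (d (x, y)) x := fun x y => by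
    have h := (hasDerivAt_partial_fst_of_differentiable hdiff x y).sub
      (hasDerivAt_cosh_sub_sub_log_fst hc₃ x y)
    rwa [hx, sub_sub_sub_cancel_right] at h
  have hdy : ∀ x y, HasDerivAt (fun s => d (x, s)) (d (x, y)) y := fun x y => by
    have h := (hasDerivAt_partial_snd_of_differentiable hdiff x y).sub
      (hasDerivAt_cosh_sub_sub_log_snd hc₃ x y)
    rwa [hy, sub_sub_sub_cancel_right] at h
  refine ⟨d (0, 0), fun x y => ?_⟩
  rw [← eq_mul_exp_add_of_hasDerivAt_partial_self hdx hdy x y]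
  ring
end
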